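/- Let (𝒰, ℰ) be a K-fat model of a graph J in a graph G with K ≥ 5, and for each vertex i of J let U'_i := B_G(U_i, 2) and let each branch path E'_{ij} be a U'_i–U'_j subpath of E_{ij}. Then (𝒰', ℰ') is a (K−4)-fat model of J in G. -/

import Mathlib

/-!
Thickening two sets by radius `2` lowers the distance between them by at most `4` (triangle
inequality), so every fatness bound drops from `K` to `K - 4`; since `K - 4 > 0`, these bounds
also give the required disjointness. Balls around connected sets stay connected, since every
vertex of the ball is joined to the centre set by a walk inside the ball. A new branch path is
cut out of the old one: from its last vertex in `B_G(U_x, 2)` to the next vertex in `B_G(U_y, 2)`.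
-/

open SimpleGraph

/-- A `K`-fat model `(𝒰, ℰ)` of a graph `J` in a graph `G`: pairwise disjoint connected
branch sets `U x` for the vertices `x` of `J`, and for each edge `xy` of `J` a branch
path `E x y` (recorded via its vertex set, realized by a path of `G` from `U x` to `U y`
meeting `U x` and `U y` only in its endvertices), such that branch paths avoid the branch
sets of non-incident vertices, distinct branch paths are internally disjoint, and any two
distinct members of `𝒰 ∪ ℰ` have distance at least `K` in `G`, except for a branch path
and a branch set of one of the endvertices of the corresponding edge. -/
structure FatModel {α β : Type*} (J : SimpleGraph α) (G : SimpleGraph β) (K : ℕ) where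
  U : α → Set β
  conn : ∀ x, (G.induce (U x)).Connected
  disj : ∀ x y, x ≠ y → Disjoint (U x) (U y)
  E : α → α → Set β
  Esymm : ∀ x y, E x y = E y x
  path : ∀ ⦃x y⦄, J.Adj x y →
    ∃ (a b : β) (p : G.Walk a b), p.IsPath ∧ a ∈ U x ∧ b ∈ U y ∧
      E x y = {v | v ∈ p.support} ∧
      (∀ v ∈ p.support, v ∈ U x → v = a) ∧
      (∀ v ∈ p.support, v ∈ U y → v = b)
  path_disj : ∀ ⦃x y⦄, J.Adj x y → ∀ z, z ≠ x → z ≠ y → Disjoint (E x y) (U z)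
  paths_int_disj : ∀ ⦃x y x' y'⦄, J.Adj x y → J.Adj x' y' → s(x, y) ≠ s(x', y') →
    ∀ v, v ∈ E x y → v ∈ E x' y' → v ∈ (U x ∪ U y) ∩ (U x' ∪ U y')
  fat_UU : ∀ x y, x ≠ y → ∀ u ∈ U x, ∀ w ∈ U y, K ≤ G.dist u w
  fat_UE : ∀ ⦃x y⦄, J.Adj x y → ∀ z, z ≠ x → z ≠ y → ∀ u ∈ E x y, ∀ w ∈ U z, K ≤ G.dist u w
  fat_EE : ∀ ⦃x y x' y'⦄, J.Adj x y → J.Adj x' y' → s(x, y) ≠ s(x', y') →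
    ∀ u ∈ E x y, ∀ w ∈ E x' y', K ≤ G.dist u w

/-- `J` is a `K`-fat minor of `G` if `G` contains a `K`-fat model of `J`. -/
def IsFatMinor {α β : Type*} (G : SimpleGraph β) (J : SimpleGraph α) (K : ℕ) : Prop :=
  Nonempty (FatModel J G K)

namespace SimpleGraph

variable {V : Type*} {G : SimpleGraph V}

/-- The ball `B_G(S, r)`. -/
def cthickening (G : SimpleGraph V) (S : Set V) (r : ℕ) : Set V :=
  {v | ∃ u ∈ S, ∃ p : G.Walk u v, p.length ≤ r}

theorem subset_cthickening (S : Set V) (r : ℕ) : S ⊆ G.cthickening S r :=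
  fun v hv => ⟨v, hv, .nil, Nat.zero_le r⟩

theorem dist_le_length_add_dist_add_length {u u' w w' : V} (p : G.Walk u u')
    (q : G.Walk w' w) : G.dist u w ≤ p.length + G.dist u' w' + q.length := by
  have hp := dist_le p
  have hq := dist_le q
  calc G.dist u w ≤ G.dist u u' + G.dist u' w := p.reachable.dist_triangle_left w
    _ ≤ G.dist u u' + (G.dist u' w' + G.dist w' w) :=
      Nat.add_le_add_left (q.reachable.dist_triangle_right u') _
    _ ≤ p.length + G.dist u' w' + q.length := by omega

theorem sub_le_dist_of_mem_cthickening {S T : Set V} {K r s : ℕ}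
    (h : ∀ u ∈ S, ∀ w ∈ T, K ≤ G.dist u w) {u' w' : V}
    (hu' : u' ∈ G.cthickening S r) (hw' : w' ∈ G.cthickening T s) :
    K - (r + s) ≤ G.dist u' w' := by
  obtain ⟨u, hu, p, hp⟩ := hu'
  obtain ⟨w, hw, q, hq⟩ := hw'
  have := h u hu w hw
  have := dist_le_length_add_dist_add_length p q.reverse
  rw [Walk.length_reverse] at this
  omega

theorem disjoint_of_forall_dist_pos {S T : Set V} (h : ∀ u ∈ S, ∀ w ∈ T, 0 < G.dist u w) :
    Disjoint S T :=
  Set.disjoint_left.mpr fun v hS hT => by simpa using h v hS v hT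

theorem connected_induce_cthickening {S : Set V} (hS : (G.induce S).Connected) (r : ℕ) :
    (G.induce (G.cthickening S r)).Connected := by
  classical
  obtain ⟨u₀, hu₀⟩ := hS.nonempty
  refine G.induce_connected_of_patches u₀ (subset_cthickening S r hu₀) fun {v} hv => ?_
  obtain ⟨u, hu, p, hp⟩ := hv
  have hsupport : {w | w ∈ p.support} ⊆ G.cthickening S r := fun w hw =>
    ⟨u, hu, p.takeUntil w hw, (p.length_takeUntil_le_length hw).trans hp⟩
  exact ⟨S ∪ {w | w ∈ p.support},
    Set.union_subset (subset_cthickening S r) hsupport, Or.inl hu₀, Or.inr p.end_mem_support,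
    induce_union_connected hS.preconnected p.connected_induce_support.preconnected
      ⟨u, hu, p.start_mem_support⟩ _ _⟩

/-- `P` is the vertex set of an `A`–`B` path, i.e. one meeting `A` only in its first and `B`
only in its last vertex. -/
def IsPathBetween (G : SimpleGraph V) (A B P : Set V) : Prop :=
  ∃ (a b : V) (p : G.Walk a b), p.IsPath ∧ a ∈ A ∧ b ∈ B ∧ P = {v | v ∈ p.support} ∧
    (∀ v ∈ p.support, v ∈ A → v = a) ∧ (∀ v ∈ p.support, v ∈ B → v = b)

theorem IsPathBetween.symm {A B P : Set V} (h : G.IsPathBetween A B P) :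
    G.IsPathBetween B A P := by
  obtain ⟨a, b, p, hp, ha, hb, rfl, hA, hB⟩ := h
  exact ⟨b, a, p.reverse, hp.reverse, hb, ha, by simp, by simpa using hB, by simpa using hA⟩

theorem isPathBetween_comm {A B P : Set V} : G.IsPathBetween A B P ↔ G.IsPathBetween B A P :=
  ⟨.symm, .symm⟩

theorem Walk.exists_eq_append_of_mem {T : Set V} {a b : V} (p : G.Walk a b) (hb : b ∈ T) :
    ∃ c ∈ T, ∃ (q : G.Walk a c) (r : G.Walk c b), p = q.append r ∧
      ∀ v ∈ q.support, v ∈ T → v = c := by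
  induction p with
  | nil => exact ⟨_, hb, .nil, .nil, rfl, fun v hv _ => by simpa using hv⟩
  | @cons u _ _ h p ih =>
    by_cases hu : u ∈ T
    · exact ⟨u, hu, .nil, .cons h p, rfl, fun v hv _ => by simpa using hv⟩
    · obtain ⟨c, hc, q, r, rfl, hq⟩ := ih hb
      refine ⟨c, hc, .cons h q, r, rfl, fun v hv hvT => ?_⟩
      rcases List.mem_cons.mp (Walk.support_cons h q ▸ hv) with rfl | hv
      exacts [absurd hvT hu, hq v hv hvT]

theorem Walk.IsPath.exists_isPathBetween_subset {A B : Set V} {a b : V} {p : G.Walk a b}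
    (hp : p.IsPath) (ha : a ∈ A) (hb : b ∈ B) :
    ∃ P ⊆ {v | v ∈ p.support}, G.IsPathBetween A B P := by
  -- Cut `p` after its last visit to `A`, then before its first subsequent visit to `B`.
  obtain ⟨c, hc, q, r, hqr, hq⟩ := p.reverse.exists_eq_append_of_mem ha
  obtain ⟨d, hd, q', r', hqr', hq'⟩ := q.reverse.exists_eq_append_of_mem hb
  have hq_sub : q.support ⊆ p.support := fun v hv => by
    have := Walk.support_subset_support_append_left q r hv
    rwa [← hqr, Walk.support_reverse, List.mem_reverse] at this
  have hq'_sub : q'.support ⊆ q.support := fun v hv => by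
    have := Walk.support_subset_support_append_left q' r' hv
    rwa [← hqr', Walk.support_reverse, List.mem_reverse] at this
  have hq_path : q.IsPath := (hqr ▸ hp.reverse).of_append_left
  refine ⟨{v | v ∈ q'.support}, fun v hv => hq_sub (hq'_sub hv), c, d, q',
    (hqr' ▸ hq_path.reverse).of_append_left, hc, hd, rfl,
    fun v hv => hq v (hq'_sub hv), hq'⟩

end SimpleGraph

namespace FatModel

variable {α β : Type*} {J : SimpleGraph α} {G : SimpleGraph β} {K : ℕ} (M : FatModel J G K)

theorem disjoint_E_of_pos (hK : 0 < K) {x y x' y' : α} (h : J.Adj x y) (h' : J.Adj x' y')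
    (hne : s(x, y) ≠ s(x', y')) : Disjoint (M.E x y) (M.E x' y') :=
  disjoint_of_forall_dist_pos fun u hu w hw => hK.trans_le (M.fat_EE h h' hne u hu w hw)

theorem fat_UU_cthickening {r : ℕ} {x y : α} (hxy : x ≠ y) {u w : β}
    (hu : u ∈ G.cthickening (M.U x) r) (hw : w ∈ G.cthickening (M.U y) r) :
    K - 2 * r ≤ G.dist u w :=
  two_mul r ▸ sub_le_dist_of_mem_cthickening (M.fat_UU x y hxy) hu hw

theorem fat_UE_cthickening {r : ℕ} {x y z : α} (h : J.Adj x y) (hzx : z ≠ x)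
    (hzy : z ≠ y) {u w : β} (hu : u ∈ M.E x y) (hw : w ∈ G.cthickening (M.U z) r) :
    K - r ≤ G.dist u w :=
  zero_add r ▸ sub_le_dist_of_mem_cthickening (M.fat_UE h z hzx hzy)
    (subset_cthickening _ 0 hu) hw

noncomputable def cthickeningE (r : ℕ) (x y : α) : Set β :=
  Classical.epsilon fun P =>
    P ⊆ M.E x y ∧ G.IsPathBetween (G.cthickening (M.U x) r) (G.cthickening (M.U y) r) P

theorem cthickeningE_comm (r : ℕ) (x y : α) : M.cthickeningE r x y = M.cthickeningE r y x := by
  unfold cthickeningE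
  congr 1
  ext P
  rw [M.Esymm, isPathBetween_comm]

theorem cthickeningE_spec (r : ℕ) {x y : α} (h : J.Adj x y) :
    M.cthickeningE r x y ⊆ M.E x y ∧
      G.IsPathBetween (G.cthickening (M.U x) r) (G.cthickening (M.U y) r)
        (M.cthickeningE r x y) := by
  obtain ⟨a, b, p, hp, ha, hb, hE, -, -⟩ := M.path h
  obtain ⟨P, hP, hPath⟩ := hp.exists_isPathBetween_subset
    (subset_cthickening _ r ha) (subset_cthickening _ r hb)
  have hex : ∃ P, P ⊆ M.E x y ∧
      G.IsPathBetween (G.cthickening (M.U x) r) (G.cthickening (M.U y) r) P :=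
    ⟨P, hE ▸ hP, hPath⟩
  exact Classical.epsilon_spec hex

noncomputable def cthickening (r : ℕ) (hr : 2 * r < K) : FatModel J G (K - 2 * r) where
  U x := G.cthickening (M.U x) r
  conn x := connected_induce_cthickening (M.conn x) r
  disj x y hxy := disjoint_of_forall_dist_pos fun _ hu _ hw =>
    (Nat.sub_pos_of_lt hr).trans_le (M.fat_UU_cthickening hxy hu hw)
  E := M.cthickeningE r
  Esymm := M.cthickeningE_comm r
  path _ _ h := (M.cthickeningE_spec r h).2
  path_disj _ _ h z hzx hzy := disjoint_of_forall_dist_pos fun _ hu _ hw =>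
    lt_of_lt_of_le (by omega)
      (M.fat_UE_cthickening h hzx hzy ((M.cthickeningE_spec r h).1 hu) hw)
  paths_int_disj _ _ _ _ h h' hne v hv hv' :=
    (Set.disjoint_left.mp (M.disjoint_E_of_pos (by omega) h h' hne)
      ((M.cthickeningE_spec r h).1 hv) ((M.cthickeningE_spec r h').1 hv')).elim
  fat_UU _ _ hxy _ hu _ hw := M.fat_UU_cthickening hxy hu hw
  fat_UE _ _ h z hzx hzy _ hu _ hw := le_trans (by omega)
    (M.fat_UE_cthickening h hzx hzy ((M.cthickeningE_spec r h).1 hu) hw)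
  fat_EE _ _ _ _ h h' hne u hu w hw := le_trans (Nat.sub_le K _)
    (M.fat_EE h h' hne u ((M.cthickeningE_spec r h).1 hu) w ((M.cthickeningE_spec r h').1 hw))

end FatModel

/-- Fattening the branch sets: if `(𝒰, ℰ)` is a `K`-fat model of `J` in `G` with `K ≥ 5`,
then replacing each branch set `U i` by the ball `B_G(U i, 2)` and each branch path by a
suitable subpath of the original one yields a `(K − 4)`-fat model of `J` in `G`. -/
theorem stmt17 {α β : Type*} (J : SimpleGraph α) (G : SimpleGraph β) (K : ℕ) (hK : 5 ≤ K)
    (M : FatModel J G K) :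
    ∃ M' : FatModel J G (K - 4),
      (∀ i, M'.U i = {v : β | ∃ u ∈ M.U i, ∃ p : G.Walk u v, p.length ≤ 2}) ∧
      ∀ ⦃x y⦄, J.Adj x y → M'.E x y ⊆ M.E x y := by
  exact ⟨M.cthickening 2 (by omega), fun _ => rfl, fun _ _ h => (M.cthickeningE_spec 2 h).1⟩
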